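/- arXiv:0704.0885 — 6 statements merged into one kernel-verified Lean document; each statement's English description precedes it below -/
import Mathlib

section
/- Let X be a uniform space and d a uniformly continuous pseudometric on X. Then every d-open subset of X is a cozero set of some bounded uniformly continuous real-valued function on X. -/
open Filter MeasureTheory Topology Set

/-- `d` is a pseudometric on `X`. -/
def IsPseudometric {X : Type*} (d : X → X → ℝ) : Prop :=
  (∀ x, d x x = 0) ∧ (∀ x y, d x y = d y x) ∧ (∀ x y, 0 ≤ d x y) ∧
    ∀ x y z, d x z ≤ d x y + d y z

/-- `Lip d`: functions bounded by 1 that are 1-Lipschitz for `d`. -/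
def Lip {X : Type*} (d : X → X → ℝ) : Set (X → ℝ) :=
  {f | (∀ x, |f x| ≤ 1) ∧ ∀ x x', |f x - f x'| ≤ d x x'}

/-- `U` is open in the (possibly non-Hausdorff) topology induced by the pseudometric `d`. -/
def DOpen {X : Type*} (d : X → X → ℝ) (U : Set X) : Prop :=
  ∀ x ∈ U, ∃ ε > 0, ∀ y, d x y < ε → y ∈ U

/-- `U` is a cozero set of a bounded uniformly continuous real function on `X`. -/
def IsCozero (X : Type*) [UniformSpace X] (U : Set X) : Prop :=
  ∃ f : X → ℝ, UniformContinuous f ∧ (∃ C, ∀ x, |f x| ≤ C) ∧ U = {x | f x ≠ 0}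

/-- The σ-algebra generated by the cozero sets of `X`. -/
def cozMS (X : Type*) [UniformSpace X] : MeasurableSpace X :=
  MeasurableSpace.generateFrom {U | IsCozero X U}

/-- The pseudometric topology of `d` is separable. -/
def DSeparable {X : Type*} (d : X → X → ℝ) : Prop :=
  ∃ D : Set X, D.Countable ∧ ∀ x : X, ∀ ε : ℝ, 0 < ε → ∃ p ∈ D, d x p < ε

/-- The cardinality of `A` has measure zero: every finite nonnegative countably additive
measure on the power set of `A` vanishing on singletons is zero. -/
def HasMeasureZero (A : Type*) : Prop :=
  ∀ m : @MeasureTheory.Measure A ⊤, @MeasureTheory.IsFiniteMeasure A ⊤ m →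
    (∀ a : A, m {a} = 0) → m Set.univ = 0

/-- `Y` is a uniformly discrete subset of the uniform space `X`. -/
def UniformlyDiscrete {X : Type*} [UniformSpace X] (Y : Set X) : Prop :=
  ∃ d : X → X → ℝ, IsPseudometric d ∧ (UniformContinuous fun p : X × X => d p.1 p.2) ∧
    ∃ ε > 0, ∀ y ∈ Y, ∀ y' ∈ Y, y ≠ y' → ε ≤ d y y'

/-- `X` is a uniform D-space. -/
def IsDSpace (X : Type*) [UniformSpace X] : Prop :=
  ∀ Y : Set X, UniformlyDiscrete Y → HasMeasureZero Y

/-- Distance from a point to a set. -/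
noncomputable def distSet {X : Type*} (d : X → X → ℝ) (S : Set X) (x : X) : ℝ :=
  sInf ((d x) '' S)

/-- `fS d S x = min 1 (d(x,S))`, with the convention `fS d ∅ = 1`. -/
noncomputable def fS {X : Type*} (d : X → X → ℝ) (S : Set X) (x : X) : ℝ :=
  @ite _ S.Nonempty (Classical.propDecidable _) (min 1 (distSet d S x)) 1

/-!
A `d`-open set `U` is open in the pseudometric space `(X, d)`, where it is the cozero set of the
bounded `1`-Lipschitz function `min 1 (d(·, Uᶜ))`. Uniform continuity of `d` on `X × X` makes the
identity `X → (X, d)` uniformly continuous, and cozero sets pull back along uniformly continuous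
maps.
-/

open scoped Uniformity

section Cozero

variable {X Y : Type*} [UniformSpace X] [UniformSpace Y]

theorem isCozero_univ : IsCozero X univ :=
  ⟨fun _ => 1, uniformContinuous_const, ⟨1, fun _ => by norm_num⟩, by simp⟩

theorem IsCozero.preimage {f : X → Y} (hf : UniformContinuous f) {V : Set Y}
    (hV : IsCozero Y V) : IsCozero X (f ⁻¹' V) := by
  obtain ⟨g, hg, ⟨C, hC⟩, rfl⟩ := hV
  exact ⟨g ∘ f, hg.comp hf, ⟨C, fun x => hC (f x)⟩, rfl⟩

end Cozero

theorem IsOpen.isCozero {Y : Type*} [PseudoMetricSpace Y] {V : Set Y} (hV : IsOpen V) :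
    IsCozero Y V := by
  by_cases hV_univ : V = univ
  · exact hV_univ ▸ isCozero_univ
  have hne : Vᶜ.Nonempty := nonempty_compl.2 hV_univ
  refine ⟨fun y => min 1 (Metric.infDist y Vᶜ),
    ((Metric.lipschitz_infDist_pt Vᶜ).const_min 1).uniformContinuous, ⟨1, fun y => ?_⟩, ?_⟩
  · rw [abs_of_nonneg (le_min zero_le_one Metric.infDist_nonneg)]
    exact min_le_left _ _
  · ext y
    have h0 : 0 ≤ Metric.infDist y Vᶜ := Metric.infDist_nonneg
    rw [← notMem_compl_iff, hV.isClosed_compl.notMem_iff_infDist_pos hne]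
    change _ ↔ min 1 _ ≠ 0
    grind

theorem uniformContinuous_iff_uniformContinuous_dist {X Y : Type*} [UniformSpace X]
    [PseudoMetricSpace Y] {f : X → Y} :
    UniformContinuous f ↔ UniformContinuous fun p : X × X => dist (f p.1) (f p.2) := by
  refine ⟨fun hf => (hf.comp uniformContinuous_fst).dist (hf.comp uniformContinuous_snd),
    fun h => ?_⟩
  -- compare `(x, x)`, where the distance vanishes, with `(x, y)`
  have hpair : Tendsto (fun p : X × X => ((p.1, p.1), p)) (𝓤 X) (𝓤 (X × X)) := by
    rw [uniformity_prod]
    exact tendsto_inf.2 ⟨tendsto_comap_iff.2 (tendsto_diag_uniformity Prod.fst _),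
      tendsto_comap_iff.2 tendsto_id⟩
  refine Metric.uniformity_basis_dist.tendsto_right_iff.2 fun ε hε => ?_
  filter_upwards [(Tendsto.comp h hpair) (Metric.dist_mem_uniformity hε)] with p hp
  simpa [Real.dist_eq] using hp

def WithPseudometric {X : Type*} (_d : X → X → ℝ) : Type _ := X

def toWithPseudometric {X : Type*} (d : X → X → ℝ) : X → WithPseudometric d := id

noncomputable instance {X : Type*} {d : X → X → ℝ} [hd : Fact (IsPseudometric d)] :
    PseudoMetricSpace (WithPseudometric d) where
  dist := d
  dist_self := hd.out.1
  dist_comm := hd.out.2.1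
  dist_triangle := hd.out.2.2.2

section WithPseudometric

variable {X : Type*} {d : X → X → ℝ} [Fact (IsPseudometric d)]

theorem DOpen.isOpen {U : Set X} (hU : DOpen d U) : IsOpen (X := WithPseudometric d) U := by
  refine Metric.isOpen_iff.2 fun x hx => ?_
  obtain ⟨ε, hε, hball⟩ := hU x hx
  exact ⟨ε, hε, fun y hy => hball y (by rwa [Metric.mem_ball, dist_comm] at hy)⟩

theorem uniformContinuous_toWithPseudometric [UniformSpace X]
    (hdu : UniformContinuous fun p : X × X => d p.1 p.2) :
    UniformContinuous (toWithPseudometric d) :=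
  uniformContinuous_iff_uniformContinuous_dist.2 hdu

end WithPseudometric

/-- every `d`-open set is a cozero set, for a u.c. pseudometric `d`. -/
theorem dOpen_isCozero {X : Type*} [UniformSpace X] (d : X → X → ℝ)
    (hd : IsPseudometric d) (hdu : UniformContinuous fun p : X × X => d p.1 p.2)
    (U : Set X) (hU : DOpen d U) : IsCozero X U := by
  have : Fact (IsPseudometric d) := ⟨hd⟩
  exact hU.isOpen.isCozero.preimage (uniformContinuous_toWithPseudometric hdu)
end

section
/- (A.H. Stone σ-discrete refinement for pseudometrics) Let d be a pseudometric on a set X and ε > 0. Then there exist collections W_n (n = 1, 2, …) of nonempty subsets of X such that: (1) the union ⋃_n W_n covers X; (2) every member of every W_n is open in the d-topology; (3) every member of W_n has d-diameter at most ε; (4) each W_n is uniformly d-discrete, i.e., there exists δ_n > 0 such that d(x,x') ≥ δ_n whenever x ∈ V, x' ∈ V' for distinct V, V' ∈ W_n. -/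
open Filter MeasureTheory Topology Set

/-!
Well-order `X` and let `c x` be the first centre `s` with `d s x < ε / 2`. For `r > 0` and each
centre `s`, glue the balls `B(x, r)` over those `x` with `c x = s` whose ball `B(x, 3r)` still lies
inside `B(s, ε / 2)`. Such a piece has diameter at most `ε`, and two pieces with distinct centres
`s ≺ t`, grown from `p` and `q`, stay `r` apart: `d p q < 3r` would put `q` in `B(s, ε / 2)`,
contradicting the minimality of `t = c q`. Every `x` lies in the piece of `c x` once `3r` is
smaller than `ε / 2 - d (c x) x`, so the radii `r = 1 / (n + 1)` give the cover.
-/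

section StonePiece

variable {X : Type*} {d : X → X → ℝ}

def dBall (d : X → X → ℝ) (x : X) (r : ℝ) : Set X :=
  {y | d x y < r}

theorem DOpen.biUnion {ι : Type*} {S : Set ι} {U : ι → Set X}
    (h : ∀ i ∈ S, DOpen d (U i)) :
    DOpen d (⋃ i ∈ S, U i) := by
  intro x hx
  obtain ⟨i, hi, hxi⟩ := mem_iUnion₂.mp hx
  obtain ⟨δ, hδ, hball⟩ := h i hi x hxi
  exact ⟨δ, hδ, fun y hy => mem_iUnion₂.mpr ⟨i, hi, hball y hy⟩⟩

theorem IsPseudometric.dOpen_dBall (hd : IsPseudometric d) (x : X) (r : ℝ) :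
    DOpen d (dBall d x r) :=
  fun y hy =>
    ⟨r - d x y, sub_pos.mpr hy, fun z hz => by
      have := hd.2.2.2 x y z
      simp only [dBall, mem_ofPred_eq]
      linarith⟩

theorem IsPseudometric.dist_le_of_mem_dBall (hd : IsPseudometric d) {s y y' : X} {ρ : ℝ}
    (hy : y ∈ dBall d s ρ) (hy' : y' ∈ dBall d s ρ) : d y y' ≤ 2 * ρ := by
  have := hd.2.2.2 y s y'
  rw [hd.2.1 y s] at this
  simp only [dBall, mem_ofPred_eq] at hy hy'
  linarith

def stonePiece (d : X → X → ℝ) (c : X → X) (ρ r : ℝ) (s : X) : Set X :=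
  ⋃ x ∈ {x | c x = s ∧ dBall d x (3 * r) ⊆ dBall d s ρ}, dBall d x r

theorem mem_stonePiece {c : X → X} {ρ r : ℝ} {s y : X} :
    y ∈ stonePiece d c ρ r s ↔
      ∃ x, (c x = s ∧ dBall d x (3 * r) ⊆ dBall d s ρ) ∧ d x y < r := by
  simp only [stonePiece, mem_iUnion, exists_prop]
  rfl

theorem mem_dBall_of_mem_stonePiece {c : X → X} {ρ r : ℝ} (hr : 0 ≤ r) {s y : X}
    (hy : y ∈ stonePiece d c ρ r s) : y ∈ dBall d s ρ := by
  obtain ⟨x, ⟨-, hsub⟩, hxy⟩ := mem_stonePiece.mp hy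
  exact hsub (show d x y < 3 * r by linarith)

namespace IsPseudometric

theorem dOpen_stonePiece (hd : IsPseudometric d) (c : X → X) (ρ r : ℝ) (s : X) :
    DOpen d (stonePiece d c ρ r s) :=
  DOpen.biUnion fun x _ => hd.dOpen_dBall x r

theorem mem_stonePiece_self (hd : IsPseudometric d) {c : X → X} {ρ r : ℝ} (hr : 0 < r) {x : X}
    (hx : 3 * r ≤ ρ - d (c x) x) : x ∈ stonePiece d c ρ r (c x) := by
  refine mem_stonePiece.mpr ⟨x, ⟨rfl, fun z hz => ?_⟩, by rw [hd.1 x]; exact hr⟩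
  have := hd.2.2.2 (c x) x z
  simp only [dBall, mem_ofPred_eq] at hz ⊢
  linarith

theorem le_dist_of_mem_stonePiece (hd : IsPseudometric d) {lt : X → X → Prop}
    [Std.Trichotomous lt] {c : X → X} {ρ r : ℝ} (hc : ∀ x t, d t x < ρ → ¬ lt t (c x))
    {s t y y' : X} (hst : s ≠ t) (hy : y ∈ stonePiece d c ρ r s)
    (hy' : y' ∈ stonePiece d c ρ r t) : r ≤ d y y' := by
  obtain ⟨p, ⟨rfl, hp⟩, hpy⟩ := mem_stonePiece.mp hy
  obtain ⟨q, ⟨rfl, hq⟩, hqy'⟩ := mem_stonePiece.mp hy'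
  obtain ⟨-, hsymm, -, htri⟩ := hd
  have hpq : 3 * r ≤ d p q := by
    by_contra! hlt
    rcases trichotomous_of lt (c p) (c q) with h | h | h
    · exact hc q (c p) (hp hlt) h
    · exact hst h
    · exact hc p (c q) (hq (show d q p < 3 * r by rwa [hsymm])) h
  have := htri p y q
  have := htri y y' q
  rw [hsymm y' q] at this
  linarith

end IsPseudometric

end StonePiece

/-- A.H. Stone σ-discrete refinement for pseudometrics. -/
theorem sigma_discrete_cover {X : Type*} (d : X → X → ℝ) (hd : IsPseudometric d)
    (ε : ℝ) (hε : 0 < ε) :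
    ∃ W : ℕ → Set (Set X),
      (∀ x : X, ∃ n, ∃ V ∈ W n, x ∈ V) ∧
      (∀ n, ∀ V ∈ W n, V.Nonempty) ∧
      (∀ n, ∀ V ∈ W n, DOpen d V) ∧
      (∀ n, ∀ V ∈ W n, ∀ x ∈ V, ∀ x' ∈ V, d x x' ≤ ε) ∧
      (∀ n, ∃ δ > 0, ∀ V ∈ W n, ∀ V' ∈ W n, V ≠ V' →
        ∀ x ∈ V, ∀ x' ∈ V', δ ≤ d x x') := by
  obtain ⟨c, hc_mem, hc_min⟩ : ∃ c : X → X, (∀ x, d (c x) x < ε / 2) ∧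
      ∀ x t, d t x < ε / 2 → ¬ WellOrderingRel t (c x) := by
    choose c hc_mem hc_min using fun x =>
      (IsWellFounded.wf (r := @WellOrderingRel X)).has_min {s | d s x < ε / 2}
        ⟨x, by simpa [hd.1 x] using half_pos hε⟩
    exact ⟨c, hc_mem, hc_min⟩
  have hr : ∀ n : ℕ, (0 : ℝ) < 1 / (n + 1) := fun n => Nat.one_div_pos_of_nat
  refine ⟨fun n => {V | V.Nonempty ∧ V ∈ range (stonePiece d c (ε / 2) (1 / (n + 1)))},
    fun x => ?_, fun n V hV => hV.1, ?_, ?_, fun n => ⟨_, hr n, ?_⟩⟩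
  · obtain ⟨n, hn⟩ := exists_nat_one_div_lt
      (div_pos (sub_pos.mpr (hc_mem x)) three_pos : (0 : ℝ) < (ε / 2 - d (c x) x) / 3)
    have hx : x ∈ stonePiece d c (ε / 2) (1 / (n + 1)) (c x) :=
      hd.mem_stonePiece_self (hr n) (by linarith)
    exact ⟨n, _, ⟨⟨x, hx⟩, _, rfl⟩, hx⟩
  · rintro n V ⟨-, s, rfl⟩
    exact hd.dOpen_stonePiece c _ _ s
  · rintro n V ⟨-, s, rfl⟩ x hx x' hx'
    linarith [hd.dist_le_of_mem_dBall (mem_dBall_of_mem_stonePiece (hr n).le hx)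
      (mem_dBall_of_mem_stonePiece (hr n).le hx')]
  · rintro V ⟨-, s, rfl⟩ V' ⟨-, t, rfl⟩ hV x hx x' hx'
    exact hd.le_dist_of_mem_stonePiece hc_min (fun h => hV (congrArg _ h)) hx hx'
end

section
/- Let X be a uniform space, d a uniformly continuous pseudometric on X, and suppose d is separable (the pseudometric topology of d is separable). Then the set Lip(d) with the topology of pointwise convergence on X is metrizable; consequently every linear functional on the bounded uniformly continuous functions that is sequentially continuous on Lip(d) is continuous on Lip(d). -/
open Filter MeasureTheory Topology Set

/-!
A function that is `1`-Lipschitz for `d` is controlled everywhere by its values on a `d`-dense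
set, uniformly over all such functions: `|f x - g x| ≤ |f p - g p| + 2 d(x, p)`. Hence on
`Lip d` pointwise convergence on a countable `d`-dense set `D` already is pointwise convergence
on `X`, so restriction to `D` embeds `Lip d` into the metrizable space `ℝ^D`. In a metrizable
space sequential continuity is continuity.
-/

section DenseRestriction

variable {X : Type*} {d : X → X → ℝ} {D : Set X}

theorem abs_sub_le_abs_sub_add_two_mul {f g : X → ℝ}
    (hf : ∀ x x', |f x - f x'| ≤ d x x') (hg : ∀ x x', |g x - g x'| ≤ d x x') (x p : X) :
    |f x - g x| ≤ |f p - g p| + 2 * d x p :=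
  calc |f x - g x| = |(f x - f p) + (f p - g p) + (g p - g x)| := by ring_nf
    _ ≤ |f x - f p| + |f p - g p| + |g p - g x| := abs_add_three _ _ _
    _ ≤ d x p + |f p - g p| + d x p := by
        gcongr
        · exact hf x p
        · rw [abs_sub_comm]; exact hg x p
    _ = |f p - g p| + 2 * d x p := by ring

theorem tendsto_apply_of_tendsto_apply_of_dense {ι : Type*} {l : Filter ι} {F : ι → X → ℝ}
    {f : X → ℝ} (hF : ∀ i x x', |F i x - F i x'| ≤ d x x')
    (hf : ∀ x x', |f x - f x'| ≤ d x x') (hD : ∀ x : X, ∀ ε : ℝ, 0 < ε → ∃ p ∈ D, d x p < ε)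
    (hFD : ∀ p ∈ D, Tendsto (fun i => F i p) l (𝓝 (f p))) (x : X) :
    Tendsto (fun i => F i x) l (𝓝 (f x)) := by
  refine Metric.tendsto_nhds.2 fun ε hε => ?_
  obtain ⟨p, hpD, hxp⟩ := hD x (ε / 3) (by positivity)
  filter_upwards [Metric.tendsto_nhds.1 (hFD p hpD) (ε / 3) (by positivity)] with i hi
  rw [Real.dist_eq] at hi ⊢
  linarith [abs_sub_le_abs_sub_add_two_mul (hF i) hf x p]

theorem eq_of_eqOn_dense {f g : X → ℝ} (hf : ∀ x x', |f x - f x'| ≤ d x x')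
    (hg : ∀ x x', |g x - g x'| ≤ d x x') (hD : ∀ x : X, ∀ ε : ℝ, 0 < ε → ∃ p ∈ D, d x p < ε)
    (hfg : Set.EqOn f g D) : f = g :=
  funext fun x => tendsto_const_nhds_iff.1 <|
    tendsto_apply_of_tendsto_apply_of_dense (l := (⊤ : Filter Unit)) (fun _ => hf) hg hD
      (fun p hp => by rw [hfg hp]; exact tendsto_const_nhds) x

theorem isEmbedding_restrict_of_dense {S : Set (X → ℝ)}
    (hS : ∀ f ∈ S, ∀ x x', |f x - f x'| ≤ d x x')
    (hD : ∀ x : X, ∀ ε : ℝ, 0 < ε → ∃ p ∈ D, d x p < ε) :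
    IsEmbedding fun f : S => fun p : D => f.1 p := by
  have hcont : Continuous fun f : S => fun p : D => f.1 p :=
    continuous_pi fun p => (continuous_apply p.1).comp continuous_subtype_val
  refine .mk' _ (fun f g hfg => Subtype.ext <| eq_of_eqOn_dense (hS f f.2) (hS g g.2) hD
    fun p hp => congrFun hfg ⟨p, hp⟩) fun f => le_antisymm ?_ (hcont.tendsto f).le_comap
  refine tendsto_id'.1 <| tendsto_subtype_rng.2 <| tendsto_pi_nhds.2 <|
    tendsto_apply_of_tendsto_apply_of_dense (F := fun g : S => g.1) (fun g => hS g g.2)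
      (hS f f.2) hD fun p hp => ?_
  exact ((continuous_apply (A := fun _ : D => ℝ) ⟨p, hp⟩).tendsto _).comp tendsto_comap

theorem DSeparable.metrizableSpace {S : Set (X → ℝ)}
    (hS : ∀ f ∈ S, ∀ x x', |f x - f x'| ≤ d x x') (hsep : DSeparable d) :
    TopologicalSpace.MetrizableSpace S := by
  obtain ⟨D, hDc, hD⟩ := hsep
  have : Countable D := hDc.to_subtype
  exact (isEmbedding_restrict_of_dense hS hD).metrizableSpace

end DenseRestriction

theorem continuousOn_of_forall_tendsto_comp {α β : Type*} [TopologicalSpace α]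
    [TopologicalSpace β] {s : Set α} [SequentialSpace s] {φ : α → β}
    (h : ∀ (u : ℕ → α) (a : α), (∀ n, u n ∈ s) → a ∈ s → Tendsto u atTop (𝓝 a) →
      Tendsto (φ ∘ u) atTop (𝓝 (φ a))) :
    ContinuousOn φ s := by
  rw [continuousOn_iff_continuous_domRestrict]
  exact continuous_iff_seqContinuous.2 fun u a hu =>
    h (fun n => u n) a (fun n => (u n).2) a.2 (tendsto_subtype_rng.1 hu)

theorem lip_metrizable_of_separable_general {X : Type*} (d : X → X → ℝ)
    (hsep : DSeparable d) :
    TopologicalSpace.MetrizableSpace ↥(Lip d) ∧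
    ∀ μ : (X → ℝ) →ₗ[ℝ] ℝ,
      (∀ (f : ℕ → X → ℝ) (g : X → ℝ), (∀ n, f n ∈ Lip d) → g ∈ Lip d →
        (∀ x, Tendsto (fun n => f n x) atTop (𝓝 (g x))) →
        Tendsto (fun n => μ (f n)) atTop (𝓝 (μ g))) →
      ContinuousOn (fun f : X → ℝ => μ f) (Lip d) := by
  have : TopologicalSpace.MetrizableSpace (Lip d) := hsep.metrizableSpace fun f hf => hf.2
  refine ⟨this, fun μ hseq => continuousOn_of_forall_tendsto_comp fun u g hu hg hug => ?_⟩
  exact hseq u g hu hg (tendsto_pi_nhds.1 hug)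

/-- for a separable u.c. pseudometric `d`, `Lip d` with the pointwise
topology is metrizable; hence sequentially continuous linear functionals on `Lip d`
are continuous on `Lip d`. -/
theorem lip_metrizable_of_separable {X : Type*} [UniformSpace X] (d : X → X → ℝ)
    (hd : IsPseudometric d) (hdu : UniformContinuous fun p : X × X => d p.1 p.2)
    (hsep : DSeparable d) :
    TopologicalSpace.MetrizableSpace ↥(Lip d) ∧
    ∀ μ : (X → ℝ) →ₗ[ℝ] ℝ,
      (∀ (f : ℕ → X → ℝ) (g : X → ℝ), (∀ n, f n ∈ Lip d) → g ∈ Lip d →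
        (∀ x, Tendsto (fun n => f n x) atTop (𝓝 (g x))) →
        Tendsto (fun n => μ (f n)) atTop (𝓝 (μ g))) →
      ContinuousOn (fun f : X → ℝ => μ f) (Lip d) :=
  lip_metrizable_of_separable_general d hsep
end

section
/- Let X be a uniform space, d a uniformly continuous pseudometric on X, and (f_n) a sequence in Lip(d). Define d̃(x,y) = sup_n |f_n(x) - f_n(y)|. Then d̃ is a uniformly continuous pseudometric on X whose induced pseudometric topology is separable, and f_n ∈ Lip(d̃) for every n. -/
open Filter MeasureTheory Topology Set

/-!
Since `d̃ ≤ d`, the quadrilateral inequality `|d̃ x y - d̃ x' y'| ≤ d̃ x x' + d̃ y y'` bounds the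
oscillation of `d̃` by that of `d`, which gives uniform continuity. For separability, `d̃` is the
pullback of the sup metric along `x ↦ (f n x)ₙ`, which lands in `c₀`, and finitely supported
rational sequences are dense in `c₀`.
-/

open scoped Uniformity

section

variable {X : Type*}

theorem isPseudometric_iSup_abs_sub {ι : Type*} [Nonempty ι] (g : ι → X → ℝ)
    (hg : ∀ x y, BddAbove (range fun i => |g i x - g i y|)) :
    IsPseudometric fun x y => ⨆ i, |g i x - g i y| := by
  refine ⟨fun x => by simp, fun x y => iSup_congr fun i => abs_sub_comm _ _,
    fun x y => Real.iSup_nonneg fun i => abs_nonneg _, fun x y z => ciSup_le fun i => ?_⟩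
  calc |g i x - g i z| ≤ |g i x - g i y| + |g i y - g i z| := abs_sub_le _ _ _
    _ ≤ _ := add_le_add (le_ciSup (hg x y) i) (le_ciSup (hg y z) i)

namespace IsPseudometric

theorem abs_sub_sub_le {d : X → X → ℝ} (hd : IsPseudometric d) (x y x' y' : X) :
    |d x y - d x' y'| ≤ d x x' + d y y' := by
  obtain ⟨-, hsymm, -, htri⟩ := hd
  rw [abs_sub_le_iff]
  constructor
  · linarith [htri x x' y, htri x' y' y, hsymm y' y]
  · linarith [htri x' x y', htri x y y', hsymm x' x, hsymm y y']

variable [UniformSpace X]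

theorem setOf_lt_mem_uniformity {d : X → X → ℝ} (hd0 : ∀ x, d x x = 0)
    (hdu : UniformContinuous fun p : X × X => d p.1 p.2) {ε : ℝ} (hε : 0 < ε) :
    {p : X × X | d p.1 p.2 < ε} ∈ 𝓤 X := by
  obtain ⟨u, hu, hdu⟩ :=
    mem_uniformity_of_uniformContinuous_invariant hdu (Metric.dist_mem_uniformity hε)
  refine mem_of_superset hu fun p hp => ?_
  have : |d p.1 p.2 - d p.2 p.2| < ε := hdu p.1 p.2 p.2 hp
  rw [hd0, sub_zero] at this
  exact (le_abs_self _).trans_lt this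

theorem uniformContinuous_of_le {d e : X → X → ℝ} (hd0 : ∀ x, d x x = 0)
    (hdu : UniformContinuous fun p : X × X => d p.1 p.2) (he : IsPseudometric e)
    (hed : ∀ x y, e x y ≤ d x y) : UniformContinuous fun p : X × X => e p.1 p.2 := by
  refine Metric.uniformity_basis_dist.tendsto_right_iff.2 fun ε hε => ?_
  have hV := setOf_lt_mem_uniformity hd0 hdu (half_pos hε)
  filter_upwards [entourageProd_mem_uniformity hV hV] with q ⟨h1, h2⟩
  rw [Real.dist_eq]
  linarith [show d q.1.1 q.2.1 < ε / 2 from h1, show d q.1.2 q.2.2 < ε / 2 from h2,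
    he.abs_sub_sub_le q.1.1 q.1.2 q.2.1 q.2.2, hed q.1.1 q.2.1, hed q.1.2 q.2.2]

end IsPseudometric

theorem dSeparable_of_forall_countable_net {e : X → X → ℝ}
    (h : ∀ ε > 0, ∃ D : Set X, D.Countable ∧ ∀ x, ∃ p ∈ D, e x p ≤ ε) : DSeparable e := by
  choose D hD hnet using fun k : ℕ => h (1 / (k + 1)) Nat.one_div_pos_of_nat
  refine ⟨⋃ k, D k, countable_iUnion hD, fun x ε hε => ?_⟩
  obtain ⟨k, hk⟩ := exists_nat_one_div_lt hε
  obtain ⟨p, hpD, hp⟩ := hnet k x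
  exact ⟨p, mem_iUnion.2 ⟨k, hpD⟩, hp.trans_lt hk⟩

def finRatSeq (c : Σ N : ℕ, Fin N → ℚ) (n : ℕ) : ℝ :=
  if h : n < c.1 then c.2 ⟨n, h⟩ else 0

theorem exists_finRatSeq_near_of_tendsto_zero {a : ℕ → ℝ} (ha : Tendsto a atTop (𝓝 0))
    {δ : ℝ} (hδ : 0 < δ) : ∃ c, ∀ n, |a n - finRatSeq c n| ≤ δ := by
  obtain ⟨N, hN⟩ := Metric.tendsto_atTop.1 ha δ hδ
  choose q hq using fun n => exists_rat_near (a n) hδ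
  refine ⟨⟨N, fun i => q i⟩, fun n => ?_⟩
  by_cases hn : n < N
  · simpa [finRatSeq, hn] using (hq n).le
  · simpa [finRatSeq, hn, Real.dist_eq] using (hN n (not_lt.1 hn)).le

theorem exists_countable_forall_abs_sub_le {f : ℕ → X → ℝ}
    (h0 : ∀ x, Tendsto (fun n => f n x) atTop (𝓝 0)) {ε : ℝ} (hε : 0 < ε) :
    ∃ D : Set X, D.Countable ∧ ∀ x, ∃ p ∈ D, ∀ n, |f n x - f n p| ≤ ε := by
  set S : (Σ N : ℕ, Fin N → ℚ) → Set X := fun c => {y | ∀ n, |f n y - finRatSeq c n| ≤ ε / 2}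
  refine ⟨range fun c : {c // (S c).Nonempty} => c.2.some, countable_range _, fun x => ?_⟩
  obtain ⟨c, hc⟩ := exists_finRatSeq_near_of_tendsto_zero (h0 x) (half_pos hε)
  have hSc : (S c).Nonempty := ⟨x, hc⟩
  refine ⟨hSc.some, ⟨⟨c, hSc⟩, rfl⟩, fun n => ?_⟩
  have hp := hSc.some_mem n
  calc |f n x - f n hSc.some| ≤ |f n x - finRatSeq c n| + |finRatSeq c n - f n hSc.some| :=
        abs_sub_le _ _ _
    _ ≤ ε / 2 + ε / 2 := add_le_add (hc n) (by rwa [abs_sub_comm])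
    _ = ε := add_halves ε

end

/-- `d̃(x,y) = sup_n |f n x - f n y|` is a separable uniformly continuous
pseudometric, and each `f n` belongs to `Lip d̃`. -/
theorem sup_pseudometric {X : Type*} [UniformSpace X] (d : X → X → ℝ)
    (hd : IsPseudometric d) (hdu : UniformContinuous fun p : X × X => d p.1 p.2)
    (f : ℕ → X → ℝ) (hf : ∀ n, f n ∈ Lip d)
    (h0 : ∀ x, Tendsto (fun n => f n x) atTop (𝓝 0))
    (dt : X → X → ℝ) (hdt : ∀ x y, dt x y = ⨆ n, |f n x - f n y|) :
    IsPseudometric dt ∧ (UniformContinuous fun p : X × X => dt p.1 p.2) ∧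
    DSeparable dt ∧ ∀ n, f n ∈ Lip dt := by
  obtain rfl : dt = fun x y => ⨆ n, |f n x - f n y| := funext₂ hdt
  have hbdd : ∀ x y, BddAbove (range fun n => |f n x - f n y|) :=
    fun x y => ⟨d x y, forall_mem_range.2 fun n => (hf n).2 x y⟩
  have hpm := isPseudometric_iSup_abs_sub f hbdd
  refine ⟨hpm, hpm.uniformContinuous_of_le hd.1 hdu fun x y => ciSup_le fun n => (hf n).2 x y,
    dSeparable_of_forall_countable_net fun ε hε => ?_,
    fun n => ⟨(hf n).1, fun x y => le_ciSup (hbdd x y) n⟩⟩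
  obtain ⟨D, hD, hnet⟩ := exists_countable_forall_abs_sub_le h0 hε
  exact ⟨D, hD, fun x => (hnet x).imp fun p ⟨hpD, hp⟩ => ⟨hpD, ciSup_le hp⟩⟩
end

section
/- Let X be a uniform space in which the cardinality of every uniformly discrete subset has measure zero (X is a uniform D-space). Let m be a bounded nonnegative countably additive measure on the σ-algebra generated by the cozero sets of X, and define μ(f) = ∫ f dm for f ∈ U_b(X). Then μ is a uniform measure: for every uniformly continuous pseudometric d on X and every net (f_α) in Lip(d) converging pointwise to 0, we have μ(f_α) → 0. -/
open Filter MeasureTheory Topology Set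

/-! Fix `δ > 0`, a maximal `δ`-separated set `Y` and a well-order on `Y`, and send each `x` to the
first `y ∈ Y` with `d x y < δ`. For each `k`, the points sent to `y` at distance `< δ - 2/(k+1)`
from it, thickened by `1/(k+1)`, form a disjoint family of cozero sets indexed by `Y`, and these
countably many families cover `X`. As `Y` is uniformly discrete, `s ↦ m (⋃ y ∈ s, U y)` taken over
the null members of a family is a measure on all subsets of `Y` vanishing on points, hence zero.
So off a null set `X` is covered by countably many members, and `m` is carried by the `d`-closure
of a countable set `D`. A net in `Lip d` tending to `0` pointwise whose integrals stay frequently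
away from `0` then yields a sequence tending to `0` on `D`, hence almost everywhere by the
Lipschitz bound, contradicting dominated convergence. -/

open Function
open scoped Uniformity

section Pseudometric

variable {X : Type*} {d : X → X → ℝ}

lemma IsPseudometric.self_eq_zero (hd : IsPseudometric d) (x : X) : d x x = 0 := hd.1 x

lemma IsPseudometric.symm (hd : IsPseudometric d) (x y : X) : d x y = d y x := hd.2.1 x y

lemma IsPseudometric.nonneg (hd : IsPseudometric d) (x y : X) : 0 ≤ d x y := hd.2.2.1 x y

lemma IsPseudometric.triangle (hd : IsPseudometric d) (x y z : X) : d x z ≤ d x y + d y z :=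
  hd.2.2.2 x y z

def dThickening (d : X → X → ℝ) (ρ : ℝ) (S : Set X) : Set X :=
  {x | ∃ s ∈ S, d x s < ρ}

lemma self_subset_dThickening (hd : IsPseudometric d) {ρ : ℝ} (hρ : 0 < ρ) (S : Set X) :
    S ⊆ dThickening d ρ S :=
  fun x hx => ⟨x, hx, by rwa [hd.self_eq_zero]⟩

lemma dThickening_biUnion {Y : Type*} (ρ : ℝ) (V : Y → Set X) (s : Set Y) :
    dThickening d ρ (⋃ y ∈ s, V y) = ⋃ y ∈ s, dThickening d ρ (V y) := by
  ext x
  simp only [dThickening, mem_iUnion, exists_prop]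
  grind

lemma distSet_le (hd : IsPseudometric d) {S : Set X} {x s : X} (hs : s ∈ S) :
    distSet d S x ≤ d x s :=
  csInf_le ⟨0, forall_mem_image.2 fun s _ => hd.nonneg x s⟩ (mem_image_of_mem _ hs)

lemma distSet_lt_iff (hd : IsPseudometric d) {S : Set X} (hS : S.Nonempty) {x : X} {r : ℝ} :
    distSet d S x < r ↔ ∃ s ∈ S, d x s < r := by
  rw [distSet, csInf_lt_iff ⟨0, forall_mem_image.2 fun s _ => hd.nonneg x s⟩ (hS.image _)]
  simp

lemma distSet_le_add (hd : IsPseudometric d) (S : Set X) (x x' : X) :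
    distSet d S x ≤ d x x' + distSet d S x' := by
  rcases S.eq_empty_or_nonempty with rfl | hS
  · simp [distSet, hd.nonneg]
  · rw [← sub_le_iff_le_add']
    refine le_csInf (hS.image _) ?_
    rintro _ ⟨s, hs, rfl⟩
    linarith [distSet_le hd hs (x := x), hd.triangle x x' s]

lemma abs_distSet_sub_le (hd : IsPseudometric d) (S : Set X) (x x' : X) :
    |distSet d S x - distSet d S x'| ≤ d x x' :=
  abs_sub_le_iff.2 ⟨by linarith [distSet_le_add hd S x x'],
    by linarith [distSet_le_add hd S x' x, hd.symm x x']⟩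

lemma exists_pairwise_separated_cover (hd : IsPseudometric d) {δ : ℝ} (hδ : 0 < δ) :
    ∃ Y : Set X, Y.Pairwise (fun y y' => δ ≤ d y y') ∧ ∀ x, ∃ y ∈ Y, d x y < δ := by
  obtain ⟨Y, hY⟩ := zorn_subset {Y : Set X | Y.Pairwise fun y y' => δ ≤ d y y'}
    fun c hcS hc => ⟨⋃₀ c, hc.pairwise_sUnion.2 hcS, fun _ => subset_sUnion_of_mem⟩
  refine ⟨Y, hY.prop, fun x => ?_⟩
  by_contra! hfar
  have hxY : x ∉ Y := fun hx => by linarith [hfar x hx, hd.self_eq_zero x]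
  have hins : (insert x Y).Pairwise fun y y' => δ ≤ d y y' :=
    pairwise_insert.2 ⟨hY.prop, fun y hy _ => ⟨hfar y hy, hd.symm y x ▸ hfar y hy⟩⟩
  exact hxY (hY.2 hins (subset_insert x Y) (mem_insert x Y))

lemma pairwise_disjoint_dThickening_of_first {Y : Set X} {r : Y → Y → Prop}
    [Std.Trichotomous r] (hd : IsPseudometric d) {δ ρ : ℝ} (c : X → Y)
    (hc : ∀ x (y : Y), d x y < δ → ¬ r y (c x)) :
    Pairwise (Disjoint on fun y : Y => dThickening d ρ {x | c x = y ∧ d x y + 2 * ρ ≤ δ}) := by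
  have disjoint_of_rel : ∀ y y', r y y' → ∀ x,
      x ∈ dThickening d ρ {x | c x = y ∧ d x y + 2 * ρ ≤ δ} →
      x ∉ dThickening d ρ {x | c x = y' ∧ d x y' + 2 * ρ ≤ δ} := by
    rintro y y' hyy' x ⟨v, ⟨rfl, hv⟩, hxv⟩ ⟨v', ⟨rfl, -⟩, hxv'⟩
    -- `v'` would be `δ`-close to `c v`, which comes before `c v'`
    refine hc v' (c v) ?_ hyy'
    linarith [hd.triangle v' x v, hd.triangle v' v (c v), hd.symm v' x]
  intro y y' hne
  refine disjoint_left.2 fun x hx hx' => ?_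
  rcases trichotomous_of r y y' with h | rfl | h
  · exact disjoint_of_rel y y' h x hx hx'
  · exact hne rfl
  · exact disjoint_of_rel y' y h x hx' hx

lemma exists_pairwise_disjoint_dThickening_cover (hd : IsPseudometric d) {δ : ℝ} {Y : Set X}
    (hY : ∀ x, ∃ y ∈ Y, d x y < δ) :
    ∃ V : ℕ → Y → Set X,
      (∀ k : ℕ, Pairwise (Disjoint on fun y => dThickening d (1 / (k + 1)) (V k y))) ∧
      ∀ x, ∃ k, ∃ y : Y, x ∈ V k y ∧ d x y < δ := by
  have hwf := (WellOrderingRel.isWellOrder (α := Y)).wf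
  have hne : ∀ x, {y : Y | d x y < δ}.Nonempty := fun x =>
    let ⟨y, hy, hxy⟩ := hY x
    ⟨⟨y, hy⟩, hxy⟩
  let c : X → Y := fun x => hwf.min _ (hne x)
  have hc : ∀ x, d x (c x) < δ := fun x => hwf.min_mem _ (hne x)
  refine ⟨fun k y => {x | c x = y ∧ d x y + 2 * (1 / (k + 1)) ≤ δ},
    fun k => pairwise_disjoint_dThickening_of_first hd c fun x y hy =>
      hwf.not_lt_min {y : Y | d x y < δ} hy,
    fun x => ?_⟩
  obtain ⟨k, hk⟩ := exists_nat_one_div_lt (half_pos (sub_pos.2 (hc x)))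
  exact ⟨k, c x, ⟨rfl, by linarith⟩, hc x⟩

end Pseudometric

section Measure

theorem HasMeasureZero.measure_iUnion_eq_zero {Y X : Type*} (hY : HasMeasureZero Y)
    [MeasurableSpace X] (m : Measure X) [IsFiniteMeasure m] {U : Y → Set X}
    (hdisj : Pairwise (Disjoint on U)) (hmeas : ∀ s : Set Y, MeasurableSet (⋃ y ∈ s, U y))
    (hnull : ∀ y, m (U y) = 0) :
    m (⋃ y, U y) = 0 := by
  let ν : @Measure Y ⊤ := @Measure.ofMeasurable Y ⊤ (fun s _ => m (⋃ y ∈ s, U y)) (by simp)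
    fun s _ hs => by
      simp only [biUnion_iUnion]
      refine measure_iUnion (fun i j hij => ?_) fun i => hmeas (s i)
      exact disjoint_iUnion₂_left.2 fun y hy => disjoint_iUnion₂_right.2 fun y' hy' =>
        hdisj fun h => disjoint_left.1 (hs hij) hy (h ▸ hy')
  have hν : ∀ s, ν s = m (⋃ y ∈ s, U y) := fun s =>
    @Measure.ofMeasurable_apply Y ⊤ _ _ _ s trivial
  have := hY ν ⟨by rw [hν]; exact measure_lt_top _ _⟩ fun y => by
    rw [hν, biUnion_singleton]; exact hnull y
  rwa [hν, biUnion_univ] at this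

theorem HasMeasureZero.exists_countable_measure_biUnion_compl_eq_zero {Y X : Type*}
    (hY : HasMeasureZero Y) [MeasurableSpace X] (m : Measure X) [IsFiniteMeasure m]
    {U : Y → Set X} (hdisj : Pairwise (Disjoint on U))
    (hmeas : ∀ s : Set Y, MeasurableSet (⋃ y ∈ s, U y)) :
    ∃ C : Set Y, C.Countable ∧ m (⋃ y ∈ Cᶜ, U y) = 0 := by
  let C := {y | 0 < m (U y)}
  refine ⟨C, Measure.countable_meas_pos_of_disjoint_iUnion
    (fun y => by simpa using hmeas {y}) hdisj, ?_⟩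
  have hW := hmeas Cᶜ
  have hnull : ∀ y, m.restrict (⋃ y ∈ Cᶜ, U y) (U y) = 0 := by
    intro y
    rw [Measure.restrict_apply' hW]
    by_cases hy : y ∈ C
    · refine (congrArg m ?_).trans measure_empty
      exact (disjoint_iUnion₂_right.2 fun y' (hy' : y' ∈ Cᶜ) =>
        hdisj (ne_of_mem_of_not_mem hy hy')).inter_eq
    · exact measure_mono_null inter_subset_left (nonpos_iff_eq_zero.1 (not_lt.1 hy))
  have := hY.measure_iUnion_eq_zero _ hdisj hmeas hnull
  rwa [Measure.restrict_apply' hW, inter_eq_right.2 (iUnion₂_subset_iUnion (· ∈ Cᶜ) U)] at this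

end Measure

section Uniform

variable {X : Type*} [UniformSpace X] {d : X → X → ℝ}

lemma IsPseudometric.setOf_lt_mem_uniformity_s6 (hd : IsPseudometric d)
    (hdu : UniformContinuous fun p : X × X => d p.1 p.2) {ε : ℝ} (hε : 0 < ε) :
    {p : X × X | d p.1 p.2 < ε} ∈ 𝓤 X := by
  have h := hdu (Metric.dist_mem_uniformity hε)
  rw [uniformity_prod_eq_prod, mem_map] at h
  obtain ⟨u, hu, v, hv, huv⟩ := mem_prod_iff.1 h
  refine mem_of_superset hv fun p hp => ?_
  -- compare `d p.1 p.2` with `d p.1 p.1 = 0` through the pair of pairs `((p.1, p.1), p)`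
  have hclose : dist (d p.1 p.1) (d p.1 p.2) < ε :=
    @huv ((p.1, p.1), p) ⟨refl_mem_uniformity hu, hp⟩
  rw [hd.self_eq_zero, Real.dist_eq, zero_sub, abs_neg, abs_of_nonneg (hd.nonneg _ _)] at hclose
  exact hclose

lemma uniformContinuous_of_abs_sub_le (hd : IsPseudometric d)
    (hdu : UniformContinuous fun p : X × X => d p.1 p.2) {g : X → ℝ}
    (hg : ∀ x x', |g x - g x'| ≤ d x x') : UniformContinuous g :=
  Metric.uniformity_basis_dist.tendsto_right_iff.2 fun _ hε =>
    mem_of_superset (hd.setOf_lt_mem_uniformity_s6 hdu hε) fun _ hp =>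
      (Real.dist_eq _ _).trans_le (hg _ _) |>.trans_lt hp

lemma measurable_cozMS {g : X → ℝ} (hg : UniformContinuous g) : Measurable[cozMS X] g := by
  let _ := cozMS X
  refine measurable_of_Ioi fun q => MeasurableSpace.measurableSet_generateFrom
    ⟨fun x => min (max (g x - q) 0) 1, ?_, ⟨1, fun x => ?_⟩, ?_⟩
  · exact (((LipschitzWith.id.sub (LipschitzWith.const q)).max_const 0).min_const 1
      ).uniformContinuous.comp hg
  · rw [abs_le]
    constructor <;> simp
  · ext x
    simp only [mem_preimage, mem_Ioi]
    constructor <;> intro h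
    · exact (lt_min (lt_max_of_lt_left (sub_pos.2 h)) one_pos).ne'
    · by_contra! hle
      exact h (by simp [max_eq_right (sub_nonpos.2 hle)])

lemma measurableSet_dThickening (hd : IsPseudometric d)
    (hdu : UniformContinuous fun p : X × X => d p.1 p.2) (ρ : ℝ) (S : Set X) :
    MeasurableSet[cozMS X] (dThickening d ρ S) := by
  rcases S.eq_empty_or_nonempty with rfl | hS
  · simp [dThickening]
  · have hpre : dThickening d ρ S = distSet d S ⁻¹' Iio ρ := by
      ext x
      exact (distSet_lt_iff hd hS).symm
    rw [hpre]
    exact measurable_cozMS (uniformContinuous_of_abs_sub_le hd hdu (abs_distSet_sub_le hd S))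
      measurableSet_Iio

theorem IsDSpace.exists_countable_ae_dist_lt (hD : IsDSpace X) (m : Measure[cozMS X] X)
    [IsFiniteMeasure m] (hd : IsPseudometric d)
    (hdu : UniformContinuous fun p : X × X => d p.1 p.2) {δ : ℝ} (hδ : 0 < δ) :
    ∃ C : Set X, C.Countable ∧ ∀ᵐ x ∂m, ∃ p ∈ C, d x p < δ := by
  let _ := cozMS X
  obtain ⟨Y, hYsep, hYcover⟩ := exists_pairwise_separated_cover hd hδ
  obtain ⟨V, hVdisj, hVcover⟩ := exists_pairwise_disjoint_dThickening_cover hd hYcover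
  have hY : HasMeasureZero Y := hD Y ⟨d, hd, hdu, δ, hδ, fun y hy y' hy' => hYsep hy hy'⟩
  have hmeas : ∀ (k : ℕ) (s : Set Y),
      MeasurableSet[cozMS X] (⋃ y ∈ s, dThickening d (1 / (k + 1)) (V k y)) := fun k s => by
    rw [← dThickening_biUnion]
    exact measurableSet_dThickening hd hdu _ _
  choose C hCc hCnull using fun k =>
    hY.exists_countable_measure_biUnion_compl_eq_zero m (hVdisj k) (hmeas k)
  refine ⟨⋃ k, Subtype.val '' C k, countable_iUnion fun k => (hCc k).image _, ?_⟩
  filter_upwards [ae_all_iff.2 fun k => measure_eq_zero_iff_ae_notMem.1 (hCnull k)] with x hx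
  obtain ⟨k, y, hxV, hxy⟩ := hVcover x
  have hyC : y ∈ C k := by
    by_contra hy
    exact hx k (mem_biUnion hy (self_subset_dThickening hd Nat.one_div_pos_of_nat _ hxV))
  exact ⟨y, mem_iUnion.2 ⟨k, mem_image_of_mem _ hyC⟩, hxy⟩

theorem IsDSpace.exists_countable_ae_dense (hD : IsDSpace X) (m : Measure[cozMS X] X)
    [IsFiniteMeasure m] (hd : IsPseudometric d)
    (hdu : UniformContinuous fun p : X × X => d p.1 p.2) :
    ∃ D : Set X, D.Countable ∧ ∀ᵐ x ∂m, ∀ ε > 0, ∃ p ∈ D, d x p < ε := by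
  choose C hCc hC using fun k : ℕ =>
    hD.exists_countable_ae_dist_lt m hd hdu (Nat.one_div_pos_of_nat (n := k))
  refine ⟨⋃ k, C k, countable_iUnion hCc, ?_⟩
  filter_upwards [ae_all_iff.2 hC] with x hx ε hε
  obtain ⟨k, hk⟩ := exists_nat_one_div_lt hε
  obtain ⟨p, hp, hxp⟩ := hx k
  exact ⟨p, mem_iUnion.2 ⟨k, hp⟩, hxp.trans hk⟩

end Uniform

section Convergence

lemma tendsto_zero_of_forall_dist_lt {X ι : Type*} {d : X → X → ℝ} {l : Filter ι}
    {g : ι → X → ℝ} (hg : ∀ i x x', |g i x - g i x'| ≤ d x x') {D : Set X}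
    (hD : ∀ p ∈ D, Tendsto (fun i => g i p) l (𝓝 0)) {x : X}
    (hx : ∀ ε > 0, ∃ p ∈ D, d x p < ε) :
    Tendsto (fun i => g i x) l (𝓝 0) := by
  refine Metric.tendsto_nhds.2 fun ε hε => ?_
  obtain ⟨p, hp, hxp⟩ := hx (ε / 2) (half_pos hε)
  filter_upwards [Metric.tendsto_nhds.1 (hD p hp) (ε / 2) (half_pos hε)] with i hi
  rw [Real.dist_0_eq_abs] at hi ⊢
  linarith [abs_sub_abs_le_abs_sub (g i x) (g i p), hg i x p]

lemma Filter.Tendsto.exists_seq_tendsto_of_frequently {ι Z : Type*} [TopologicalSpace Z]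
    [FrechetUrysohnSpace Z] {l : Filter ι} {F : ι → Z} {z : Z} (hF : Tendsto F l (𝓝 z))
    {S : Set ι} (hS : ∃ᶠ i in l, i ∈ S) :
    ∃ u : ℕ → ι, (∀ n, u n ∈ S) ∧ Tendsto (F ∘ u) atTop (𝓝 z) := by
  obtain ⟨v, hv, hvz⟩ := mem_closure_iff_seq_limit.1
    (mem_closure_of_frequently_of_tendsto (hS.mono fun i hi => mem_image_of_mem F hi) hF)
  choose u hu hFu using hv
  exact ⟨u, hu, by simpa [Function.comp_def, hFu] using hvz⟩

theorem tendsto_integral_of_ae_dense {X ι : Type*} [MeasurableSpace X] {m : Measure X}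
    [IsFiniteMeasure m] {d : X → X → ℝ} {D : Set X} (hDc : D.Countable)
    (hDm : ∀ᵐ x ∂m, ∀ ε > 0, ∃ p ∈ D, d x p < ε) {l : Filter ι} {f : ι → X → ℝ}
    (hf : ∀ i, f i ∈ Lip d) (hfm : ∀ i, AEStronglyMeasurable (f i) m)
    (h0 : ∀ p ∈ D, Tendsto (fun i => f i p) l (𝓝 0)) :
    Tendsto (fun i => ∫ x, f i x ∂m) l (𝓝 0) := by
  have : Countable D := hDc.to_subtype
  refine Metric.tendsto_nhds.2 fun ε hε => ?_
  by_contra hfar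
  have hfreq : ∃ᶠ i in l, i ∈ {i | ε ≤ dist (∫ x, f i x ∂m) 0} := by
    simpa [not_lt] using hfar
  have hD : Tendsto (fun i (p : D) => f i p) l (𝓝 0) := tendsto_pi_nhds.2 fun p => h0 p p.2
  obtain ⟨u, hu, hu0⟩ := hD.exists_seq_tendsto_of_frequently hfreq
  have hae : ∀ᵐ x ∂m, Tendsto (fun n => f (u n) x) atTop (𝓝 0) :=
    hDm.mono fun x hx => tendsto_zero_of_forall_dist_lt (fun n => (hf (u n)).2)
      (fun p hp => tendsto_pi_nhds.1 hu0 ⟨p, hp⟩) hx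
  have hlim := tendsto_integral_of_dominated_convergence (fun _ => (1 : ℝ))
    (fun n => hfm (u n)) (integrable_const 1) (fun n => ae_of_all _ (hf (u n)).1) hae
  rw [integral_zero] at hlim
  obtain ⟨n, hn⟩ := (Metric.tendsto_nhds.1 hlim ε hε).exists
  exact (hu n).not_gt hn

end Convergence

theorem dspace_measure_is_uniform_general {X : Type u} [UniformSpace X] (hD : IsDSpace X)
    (m : @MeasureTheory.Measure X (cozMS X))
    (hfin : @MeasureTheory.IsFiniteMeasure X (cozMS X) m)
    (d : X → X → ℝ) (hd : IsPseudometric d)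
    (hdu : UniformContinuous fun p : X × X => d p.1 p.2)
    (ι : Type v) [Preorder ι]
    (f : ι → X → ℝ) (hf : ∀ i, f i ∈ Lip d)
    (h0 : ∀ x, Tendsto (fun i => f i x) atTop (𝓝 0)) :
    Tendsto (fun i => ∫ x, f i x ∂m) atTop (𝓝 0) := by
  let _ := cozMS X
  obtain ⟨D, hDc, hDm⟩ := hD.exists_countable_ae_dense m hd hdu
  refine tendsto_integral_of_ae_dense hDc hDm hf (fun i => ?_) fun p _ => h0 p
  exact (measurable_cozMS (uniformContinuous_of_abs_sub_le hd hdu (hf i).2)).aestronglyMeasurable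

/-- on a uniform D-space, integration against a finite countably additive
measure on `σ(Coz X)` is a uniform measure. -/
theorem dspace_measure_is_uniform {X : Type u} [UniformSpace X] (hD : IsDSpace X)
    (m : @MeasureTheory.Measure X (cozMS X))
    (hfin : @MeasureTheory.IsFiniteMeasure X (cozMS X) m)
    (d : X → X → ℝ) (hd : IsPseudometric d)
    (hdu : UniformContinuous fun p : X × X => d p.1 p.2)
    (ι : Type v) [Preorder ι] [IsDirected ι (· ≤ ·)] [Nonempty ι]
    (f : ι → X → ℝ) (hf : ∀ i, f i ∈ Lip d)
    (h0 : ∀ x, Tendsto (fun i => f i x) atTop (𝓝 0)) :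
    Tendsto (fun i => ∫ x, f i x ∂m) atTop (𝓝 0) :=
  dspace_measure_is_uniform_general hD m hfin d hd hdu ι f hf h0
end

section
/- Let d be a pseudometric on a set X, P ⊆ X a subset with d(x,y) ≥ 1 for all distinct x, y ∈ P, and m a probability measure defined on all subsets of P with m({x}) = 0 for every x ∈ P. For each finite S ⊆ P let f_S(x) = min(1, d(x,S)) and f_P(x) = min(1, d(x,P)). Then each f_S and f_P lie in Lip(d), the net (f_S) indexed by finite subsets of P ordered by inclusion converges pointwise to f_P, ∫_P f_S dm = 1 for every finite S, and ∫_P f_P dm = 0. -/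
open Filter MeasureTheory Topology Set

/-!
Every `f_S` is `min 1 (d(·, S))` with the empty-set convention `1`, so it is characterised by
`f_S ≤ 1`, `f_S x ≤ d x s` for `s ∈ S`, and maximality among such functions; the Lipschitz bound,
monotonicity in `S` and the values on `P` all follow from this. Since `S ↦ f_S x` is antitone,
the net converges to its infimum over finite `S`, which is `f_P x`. On `P` the function `f_P`
vanishes, while `f_S = 1` off the finite, hence `m`-null, set `S` by `1`-separation.
-/

section fS

variable {X : Type*} {d : X → X → ℝ} {S T : Set X} {x : X}

theorem fS_le_one : fS d S x ≤ 1 := by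
  unfold fS
  split
  · exact min_le_left _ _
  · exact le_rfl

theorem fS_le_dist (hd : IsPseudometric d) {s : X} (hs : s ∈ S) : fS d S x ≤ d x s := by
  have hbdd : BddBelow (d x '' S) := ⟨0, by rintro _ ⟨t, -, rfl⟩; exact hd.2.2.1 x t⟩
  rw [fS, if_pos ⟨s, hs⟩]
  exact (min_le_right _ _).trans (csInf_le hbdd (mem_image_of_mem _ hs))

theorem le_fS {b : ℝ} (hb : b ≤ 1) (h : ∀ s ∈ S, b ≤ d x s) : b ≤ fS d S x := by
  unfold fS
  split
  · next hS => exact le_min hb (le_csInf (hS.image _) (forall_mem_image.2 h))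
  · exact hb

theorem fS_empty : fS d ∅ x = 1 := by
  simp [fS]

theorem fS_nonneg (hd : IsPseudometric d) : 0 ≤ fS d S x :=
  le_fS zero_le_one fun s _ => hd.2.2.1 x s

theorem fS_eq_zero_of_mem (hd : IsPseudometric d) (hx : x ∈ S) : fS d S x = 0 :=
  le_antisymm ((fS_le_dist hd hx).trans_eq (hd.1 x)) (fS_nonneg hd)

theorem fS_eq_one_of_one_le_dist (h : ∀ s ∈ S, 1 ≤ d x s) : fS d S x = 1 :=
  le_antisymm fS_le_one (le_fS le_rfl h)

theorem fS_anti (hd : IsPseudometric d) (hST : S ⊆ T) : fS d T x ≤ fS d S x :=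
  le_fS fS_le_one fun _ hs => fS_le_dist hd (hST hs)

theorem fS_le_dist_add (hd : IsPseudometric d) (x x' : X) : fS d S x ≤ d x x' + fS d S x' := by
  suffices fS d S x - d x x' ≤ fS d S x' by linarith
  refine le_fS (by linarith [fS_le_one (d := d) (S := S) (x := x), hd.2.2.1 x x']) fun s hs => ?_
  linarith [fS_le_dist (x := x) hd hs, hd.2.2.2 x x' s]

theorem fS_mem_Lip (hd : IsPseudometric d) (S : Set X) : fS d S ∈ Lip d := by
  refine ⟨fun x => abs_le.2 ⟨(fS_nonneg hd).trans' (by norm_num), fS_le_one⟩, fun x x' => ?_⟩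
  have h₁ := fS_le_dist_add (S := S) hd x x'
  have h₂ := fS_le_dist_add (S := S) hd x' x
  rw [hd.2.1 x' x] at h₂
  exact abs_sub_le_iff.2 ⟨by linarith, by linarith⟩

theorem tendsto_fS_finset (hd : IsPseudometric d) (P : Set X) (x : X) :
    Tendsto (fun S : Finset P => fS d (Subtype.val '' (S : Set P)) x) atTop (𝓝 (fS d P x)) := by
  refine tendsto_atTop_isGLB (fun S T hST => fS_anti hd (image_mono (Finset.coe_subset.2 hST)))
    ⟨?_, fun b hb => ?_⟩
  · rintro _ ⟨S, rfl⟩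
    exact fS_anti hd (Subtype.coe_image_subset P _)
  · refine le_fS ?_ fun p hp => ?_
    · simpa [fS_empty] using hb ⟨∅, rfl⟩
    · exact (hb ⟨{⟨p, hp⟩}, rfl⟩).trans (fS_le_dist hd ⟨⟨p, hp⟩, by simp, rfl⟩)

end fS

/-- the counterexample net `f_S = min(1, d(·,S))`, `S` finite `⊆ P`,
for a 1-separated set `P` carrying a diffuse probability measure. -/
theorem counterexample_net {X : Type u} (d : X → X → ℝ) (hd : IsPseudometric d)
    (P : Set X) (hsep : ∀ x ∈ P, ∀ y ∈ P, x ≠ y → 1 ≤ d x y)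
    (m : @MeasureTheory.Measure P ⊤) (hm : @MeasureTheory.IsProbabilityMeasure P ⊤ m)
    (hdiff : ∀ p : P, m {p} = 0) :
    (∀ S : Finset P, fS d (Subtype.val '' (S : Set P)) ∈ Lip d) ∧
    fS d P ∈ Lip d ∧
    (∀ x : X, Tendsto (fun S : Finset P => fS d (Subtype.val '' (S : Set P)) x)
      atTop (𝓝 (fS d P x))) ∧
    (∀ S : Finset P, (∫ p : P, fS d (Subtype.val '' (S : Set P)) ↑p ∂m) = 1) ∧
    (∫ p : P, fS d P ↑p ∂m) = 0 := by
  have : NullSingletonClass m := ⟨hdiff⟩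
  refine ⟨fun S => fS_mem_Lip hd _, fS_mem_Lip hd _, tendsto_fS_finset hd P, fun S => ?_, ?_⟩
  · have hS_null : m (S : Set P) = 0 := S.finite_toSet.measure_zero m
    have hS : ∀ᵐ p ∂m, p ∉ (S : Set P) := measure_eq_zero_iff_ae_notMem.1 hS_null
    have h_one : ∀ᵐ p : P ∂m, fS d (Subtype.val '' (S : Set P)) p = 1 := by
      filter_upwards [hS] with p hp
      refine fS_eq_one_of_one_le_dist ?_
      rintro _ ⟨q, hq, rfl⟩
      exact hsep _ p.2 _ q.2 fun hpq => hp (Subtype.ext hpq ▸ hq)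
    simp [integral_congr_ae h_one]
  · simp [fun p : P => fS_eq_zero_of_mem hd p.2]
end
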